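/- arXiv:2202.09729 — 2 statements merged into one kernel-verified Lean document; each statement's English description precedes it below -/
import Mathlib

section
/- Let A be the HiPPO-LegS matrix defined by A_{nk} = −(2n+1)^{1/2}(2k+1)^{1/2} for n > k, A_{nn} = −(n+1), and A_{nk} = 0 for n < k. Then A = −(1/2)I − S − p p*, where p_n = (n + 1/2)^{1/2} and S is the real skew-symmetric matrix with S_{nk} = (1/2)(2n+1)^{1/2}(2k+1)^{1/2} for n > k, S_{nn} = 0, and S_{nk} = −(1/2)(2n+1)^{1/2}(2k+1)^{1/2} for n < k. -/
/-!
With `q n = √(2n+1)` we have `p n * p k = q n * q k / 2`. Below the diagonal the rank-one term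
and `S` each contribute half of `A n k = -q n q k`, above it they cancel, and on the diagonal
`(p n)² = n + 1/2` joins the `1/2` from the identity to give `n + 1`.
-/

open Matrix

theorem Matrix.transpose_of_ite_lt_neg {ι R : Type*} [LinearOrder ι] [Ring R]
    (c : ι → ι → R) (hc : ∀ i j, c i j = c j i) :
    (of fun i j : ι => if j < i then c i j else if i = j then 0 else -c i j)ᵀ =
      -of fun i j : ι => if j < i then c i j else if i = j then 0 else -c i j := by
  ext i j
  simp only [transpose_apply, neg_apply, of_apply]
  rcases lt_trichotomy i j with h | rfl | h
  · simp [h, h.not_gt, h.ne, hc i j]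
  · simp
  · simp [h, h.not_gt, h.ne, hc i j]

theorem Real.sqrt_add_half_mul_sqrt_add_half (a b : ℝ) :
    √(a + 1 / 2) * √(b + 1 / 2) = 1 / 2 * (√(2 * a + 1) * √(2 * b + 1)) := by
  have hsqrt (x : ℝ) : √(2 * x + 1) = √2 * √(x + 1 / 2) := by
    rw [← Real.sqrt_mul zero_le_two]; ring_nf
  rw [hsqrt, hsqrt]
  linear_combination (-(1 / 2) * √(a + 1 / 2) * √(b + 1 / 2)) * Real.mul_self_sqrt zero_le_two

/-- The HiPPO-LegS matrix decomposes as `A = -(1/2)I - S - p pᵀ` with `S`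
real skew-symmetric and `p_n = √(n + 1/2)`. -/
theorem stmt_11 (N : ℕ)
    (A : Matrix (Fin N) (Fin N) ℝ)
    (hA : A = Matrix.of fun n k : Fin N =>
      if (k : ℕ) < (n : ℕ) then
        -(Real.sqrt (2 * (n : ℝ) + 1) * Real.sqrt (2 * (k : ℝ) + 1))
      else if n = k then -((n : ℝ) + 1) else 0)
    (S : Matrix (Fin N) (Fin N) ℝ)
    (hS : S = Matrix.of fun n k : Fin N =>
      if (k : ℕ) < (n : ℕ) then
        (1/2) * (Real.sqrt (2 * (n : ℝ) + 1) * Real.sqrt (2 * (k : ℝ) + 1))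
      else if n = k then 0
      else -((1/2) * (Real.sqrt (2 * (n : ℝ) + 1) * Real.sqrt (2 * (k : ℝ) + 1))))
    (p : Fin N → ℝ) (hp : p = fun n : Fin N => Real.sqrt ((n : ℝ) + 1/2)) :
    Sᵀ = -S ∧
    A = (-(1/2) : ℝ) • (1 : Matrix (Fin N) (Fin N) ℝ) - S - Matrix.vecMulVec p p := by
  subst hA hS hp
  refine ⟨transpose_of_ite_lt_neg _ fun n k => by ring, ?_⟩
  ext n k
  rcases eq_or_ne n k with rfl | hne
  · have hpn : √((n : ℝ) + 1 / 2) * √((n : ℝ) + 1 / 2) = n + 1 / 2 :=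
      Real.mul_self_sqrt (by positivity)
    simp only [of_apply, Matrix.sub_apply, Matrix.smul_apply, one_apply_eq, vecMulVec_apply,
      lt_irrefl, if_false, if_true, hpn]
    ring
  · have hpp := Real.sqrt_add_half_mul_sqrt_add_half (n : ℝ) k
    simp only [of_apply, Matrix.sub_apply, Matrix.smul_apply, one_apply_ne hne, vecMulVec_apply,
      hne, if_false, hpp]
    split_ifs <;> ring
end

section
/- Let A be the N×N matrix with entries A_{nk} = −(−1)^{n−k} for n ≤ k and A_{nk} = −1 for n ≥ k (i.e., −A has 1's below the diagonal and alternating ±1 pattern on and above it as in HiPPO-LegT). Then A = −S − p p*, where p ∈ ℝ^{N×2} has columns (1,0,1,0,…) and (0,1,0,1,…), and S is a real skew-symmetric matrix. -/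
open Matrix

/-- The (unscaled) HiPPO-LegT matrix decomposes as `A = -S - p pᵀ` where `p` has
columns `(1,0,1,0,…)` and `(0,1,0,1,…)` and `S` is real skew-symmetric. -/
theorem stmt_13 (N : ℕ)
    (A : Matrix (Fin N) (Fin N) ℝ)
    (hA : A = Matrix.of fun n k : Fin N =>
      if (n : ℕ) ≤ (k : ℕ) then -((-1 : ℝ) ^ ((k : ℕ) - (n : ℕ))) else -1)
    (p : Matrix (Fin N) (Fin 2) ℝ)
    (hp : p = Matrix.of fun (n : Fin N) (j : Fin 2) => if (n : ℕ) % 2 = (j : ℕ) then (1:ℝ) else 0) :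
    ∃ S : Matrix (Fin N) (Fin N) ℝ, Sᵀ = -S ∧ A = -S - p * pᵀ := by
  refine ⟨-A - p * pᵀ, ?_, by abel⟩
  subst hA hp
  ext n k
  simp only [Matrix.transpose_apply, Matrix.neg_apply, Matrix.sub_apply,
    Matrix.mul_apply, Fin.sum_univ_two, Matrix.of_apply, neg_sub, neg_neg]
  rcases Nat.mod_two_eq_zero_or_one (n : ℕ) with hn | hn <;>
    rcases Nat.mod_two_eq_zero_or_one (k : ℕ) with hk | hk <;>
    rcases lt_trichotomy (n : ℕ) (k : ℕ) with h | h | h <;>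
    first
      | simp [hn, hk, h.le, not_le.mpr h]
      | simp [hn, hk, h]
  all_goals first
    | rfl
    | (have hr : ((-1:ℝ)) ^ ((k:ℕ) - n) = 1 := (Nat.even_iff.mpr (by omega)).neg_one_pow
       rw [hr] <;> ring)
    | (have hr : ((-1:ℝ)) ^ ((n:ℕ) - k) = 1 := (Nat.even_iff.mpr (by omega)).neg_one_pow
       rw [hr] <;> ring)
    | (have hr : ((-1:ℝ)) ^ ((k:ℕ) - n) = -1 := (Nat.odd_iff.mpr (by omega)).neg_one_pow
       rw [hr] <;> ring)
    | (have hr : ((-1:ℝ)) ^ ((n:ℕ) - k) = -1 := (Nat.odd_iff.mpr (by omega)).neg_one_pow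
       rw [hr] <;> ring)
end
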